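/- Let V be a prefix-free set of binary strings and δ ∈ (0, 1] such that μ_σ([V]) ≤ 1 − δ for every string σ having no prefix in V. Define V^1 = V and V^{k+1} = V^k ∗ V = {σ∗τ : σ ∈ V^k, τ ∈ V}, where ∗ is concatenation. Then for every k ≥ 1 and every string τ having no prefix in V, μ_τ([V^k]) ≤ (1 − δ)^k. -/

import Mathlib

open scoped ENNReal

/-- The length-`n` prefix of a point of Cantor space `2^ω = ℕ → Bool`, as a binary string. -/
def pre (x : ℕ → Bool) (n : ℕ) : List Bool := (List.range n).map x

/-- `σ` is a (finite) prefix of `x ∈ 2^ω`. -/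
def PrefOf (σ : List Bool) (x : ℕ → Bool) : Prop := pre x σ.length = σ

/-- The cylinder `[σ] = {x ∈ 2^ω : σ ⪯ x}`. -/
def cyl (σ : List Bool) : Set (ℕ → Bool) := {x | PrefOf σ x}

/-- `[V] = ⋃_{σ ∈ V} [σ]`. -/
def cylSet (V : Set (List Bool)) : Set (ℕ → Bool) := ⋃ σ ∈ V, cyl σ

/-- A tree: a set of binary strings closed under prefixes. -/
def IsTree (T : Set (List Bool)) : Prop := ∀ σ ∈ T, ∀ τ : List Bool, τ <+: σ → τ ∈ T

/-- A pruned tree: every node has a proper extension in the tree. -/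
def Pruned (T : Set (List Bool)) : Prop := ∀ σ ∈ T, ∃ τ ∈ T, σ <+: τ ∧ σ ≠ τ

/-- The set `[T]` of paths of a tree `T`. -/
def paths (T : Set (List Bool)) : Set (ℕ → Bool) := {x | ∀ n, pre x n ∈ T}

/-- The fair-coin (uniform) product measure on Cantor space, characterized by its
values `μ [σ] = 2^{-|σ|}` on cylinders (this determines `μ` uniquely). -/
def IsFairCoin (μ : MeasureTheory.Measure (ℕ → Bool)) : Prop :=
  ∀ σ : List Bool, μ (cyl σ) = 2⁻¹ ^ σ.length

/-- A set of strings is prefix-free: no element is a proper prefix of another. -/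
def PrefixFreeSet (D : Set (List Bool)) : Prop :=
  ∀ ρ₁ ∈ D, ∀ ρ₂ ∈ D, ρ₁ <+: ρ₂ → ρ₁ = ρ₂

/-- The measure of `A` relative to `[σ]`: `μ_σ(A) = 2^{|σ|} · μ(A ∩ [σ])`. -/
noncomputable def relMeas (μ : MeasureTheory.Measure (ℕ → Bool)) (σ : List Bool)
    (A : Set (ℕ → Bool)) : ℝ≥0∞ :=
  2 ^ σ.length * μ (A ∩ cyl σ)

/-- Concatenation of sets of strings: `V ∗ W = {σ ∗ τ : σ ∈ V, τ ∈ W}`. -/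
def concatSet (V W : Set (List Bool)) : Set (List Bool) :=
  {ρ | ∃ σ ∈ V, ∃ τ ∈ W, ρ = σ ++ τ}

/-- `iterSet V k = V^{k+1}`, where `V^1 = V` and `V^{k+1} = V^k ∗ V`. -/
def iterSet (V : Set (List Bool)) : ℕ → Set (List Bool)
  | 0 => V
  | k + 1 => concatSet (iterSet V k) V

/-!
Write `V_τ = {ρ ∈ V | τ ⪯ ρ}`. For a prefix-free `D`, disjointness of the cylinders gives
`μ [D] = ∑_{σ ∈ D} 2^{-|σ|}`, and this Kraft sum is multiplicative under concatenation with a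
prefix-free left factor, since every string of `D ∗ W` then factors uniquely. If `τ` has no prefix
in `V`, then `[V ∗ W] ∩ [τ] = [V_τ ∗ W]`, so `μ_τ([V ∗ W]) = μ_τ([V]) · μ([W])`. As
`V^{k+1} = V ∗ V^k` and `μ = μ_ε` with the empty string `ε` having no prefix in `V`, induction on
`k` gives the bound.
-/

open MeasureTheory

section Cylinders

variable {σ τ : List Bool} {x : ℕ → Bool}

lemma pre_prefix_pre (x : ℕ → Bool) {m n : ℕ} (h : m ≤ n) : pre x m <+: pre x n := by
  have : (pre x n).take m = pre x m := by
    rw [pre, pre, ← List.map_take, List.take_range, Nat.min_eq_left h]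
  exact this ▸ List.take_prefix _ _

lemma prefix_pre_of_mem_cyl (hx : x ∈ cyl σ) {n : ℕ} (h : σ.length ≤ n) : σ <+: pre x n :=
  hx ▸ pre_prefix_pre x h

lemma cyl_anti (h : σ <+: τ) : cyl τ ⊆ cyl σ := by
  intro x hx
  have hpre := prefix_pre_of_mem_cyl hx le_rfl
  have hlen : (pre x σ.length).length = σ.length := by simp [pre]
  exact (List.prefix_of_prefix_length_le (pre_prefix_pre x h.length_le) (h.trans hpre)
    hlen.le).eq_of_length hlen

lemma prefix_or_prefix_of_mem_cyl (hσ : x ∈ cyl σ) (hτ : x ∈ cyl τ) : σ <+: τ ∨ τ <+: σ :=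
  List.prefix_or_prefix_of_prefix (prefix_pre_of_mem_cyl hσ (le_max_left _ τ.length))
    (prefix_pre_of_mem_cyl hτ (le_max_right σ.length _))

lemma disjoint_cyl (h₁ : ¬σ <+: τ) (h₂ : ¬τ <+: σ) : Disjoint (cyl σ) (cyl τ) :=
  Set.disjoint_left.2 fun _ hσ hτ => (prefix_or_prefix_of_mem_cyl hσ hτ).elim h₁ h₂

lemma cyl_nil : cyl [] = Set.univ := by
  ext x; simp [cyl, PrefOf, pre]

lemma mem_cyl_iff : x ∈ cyl σ ↔ ∀ i (hi : i < σ.length), x i = σ[i] := by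
  simp [cyl, PrefOf, pre, List.ext_getElem_iff]

lemma measurableSet_cyl (σ : List Bool) : MeasurableSet (cyl σ) := by
  have : cyl σ = ⋂ (i) (hi : i < σ.length), (fun x => x i) ⁻¹' {σ[i]} := by
    ext x; simp [mem_cyl_iff]
  rw [this]
  exact .iInter fun i => .iInter fun _ => measurable_pi_apply i (measurableSet_singleton _)

end Cylinders

section PrefixFree

variable {V W : Set (List Bool)}

lemma PrefixFreeSet.pairwiseDisjoint_cyl (hV : PrefixFreeSet V) : V.PairwiseDisjoint cyl :=
  fun _ h₁ _ h₂ hne =>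
    disjoint_cyl (fun h => hne (hV _ h₁ _ h₂ h)) (fun h => hne (hV _ h₂ _ h₁ h).symm)

lemma PrefixFreeSet.mono {U : Set (List Bool)} (hV : PrefixFreeSet V) (hU : U ⊆ V) :
    PrefixFreeSet U :=
  fun _ h₁ _ h₂ => hV _ (hU h₁) _ (hU h₂)

lemma concatSet_eq_image2 : concatSet V W = Set.image2 (· ++ ·) V W := by
  ext; simp [concatSet, eq_comm]

lemma PrefixFreeSet.eq_of_append_prefix {ρ₁ ρ₂ σ₁ σ₂ : List Bool} (hV : PrefixFreeSet V)
    (h₁ : ρ₁ ∈ V) (h₂ : ρ₂ ∈ V) (h : ρ₁ ++ σ₁ <+: ρ₂ ++ σ₂) : ρ₁ = ρ₂ ∧ σ₁ <+: σ₂ := by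
  have hρ : ρ₁ = ρ₂ := by
    rcases List.prefix_or_prefix_of_prefix ((List.prefix_append _ _).trans h)
      (List.prefix_append ρ₂ σ₂) with h' | h'
    · exact hV _ h₁ _ h₂ h'
    · exact (hV _ h₂ _ h₁ h').symm
  subst hρ
  exact ⟨rfl, (List.prefix_append_right_inj ρ₁).1 h⟩

lemma PrefixFreeSet.injOn_append (hV : PrefixFreeSet V) :
    Set.InjOn (fun p : List Bool × List Bool => p.1 ++ p.2) (V ×ˢ W) := by
  rintro ⟨ρ₁, σ₁⟩ ⟨h₁, -⟩ ⟨ρ₂, σ₂⟩ ⟨h₂, -⟩ (h : ρ₁ ++ σ₁ = ρ₂ ++ σ₂)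
  obtain ⟨rfl, -⟩ := hV.eq_of_append_prefix (σ₁ := σ₁) (σ₂ := σ₂) h₁ h₂ (by rw [h])
  simpa using h

lemma PrefixFreeSet.concatSet (hV : PrefixFreeSet V) (hW : PrefixFreeSet W) :
    PrefixFreeSet (concatSet V W) := by
  rintro _ ⟨ρ₁, h₁, σ₁, hσ₁, rfl⟩ _ ⟨ρ₂, h₂, σ₂, hσ₂, rfl⟩ h
  obtain ⟨rfl, hσ⟩ := hV.eq_of_append_prefix h₁ h₂ h
  rw [hW _ hσ₁ _ hσ₂ hσ]

lemma concatSet_assoc (U V W : Set (List Bool)) :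
    concatSet (concatSet U V) W = concatSet U (concatSet V W) := by
  simp only [concatSet_eq_image2, Set.image2_assoc, List.append_assoc]

lemma iterSet_succ_eq_concatSet_left (V : Set (List Bool)) (k : ℕ) :
    iterSet V (k + 1) = concatSet V (iterSet V k) := by
  induction k with
  | zero => rfl
  | succ k ih =>
    change concatSet (iterSet V (k + 1)) V = concatSet V (concatSet (iterSet V k) V)
    rw [ih, concatSet_assoc]

lemma PrefixFreeSet.iterSet (hV : PrefixFreeSet V) (k : ℕ) : PrefixFreeSet (iterSet V k) := by
  induction k with
  | zero => exact hV
  | succ k ih => exact ih.concatSet hV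

end PrefixFree

noncomputable def kraftSum (D : Set (List Bool)) : ℝ≥0∞ := ∑' σ : D, 2⁻¹ ^ (σ : List Bool).length

lemma kraftSum_concatSet {V W : Set (List Bool)} (hV : PrefixFreeSet V) :
    kraftSum (concatSet V W) = kraftSum V * kraftSum W := by
  rw [kraftSum, concatSet_eq_image2, ← Set.image_prod,
    tsum_image (fun σ : List Bool => (2⁻¹ : ℝ≥0∞) ^ σ.length) hV.injOn_append,
    ← (Equiv.Set.prod V W).symm.tsum_eq]
  change ∑' p : V × W, (2⁻¹ : ℝ≥0∞) ^ ((p.1 : List Bool) ++ p.2).length = _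
  simp_rw [List.length_append, pow_add, kraftSum, ← ENNReal.tsum_mul_right,
    ← ENNReal.tsum_mul_left]
  exact ENNReal.tsum_prod'

section Measure

variable {μ : Measure (ℕ → Bool)} {V W : Set (List Bool)} {τ : List Bool}

lemma IsFairCoin.measure_cylSet (hμ : IsFairCoin μ) (hV : PrefixFreeSet V) :
    μ (cylSet V) = kraftSum V := by
  rw [cylSet, measure_biUnion V.to_countable hV.pairwiseDisjoint_cyl fun σ _ => measurableSet_cyl σ]
  exact tsum_congr fun σ => hμ σ

lemma relMeas_nil (A : Set (ℕ → Bool)) : relMeas μ [] A = μ A := by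
  simp [relMeas, cyl_nil]

lemma cylSet_inter_cyl (hτ : ¬∃ ρ ∈ V, ρ <+: τ) : cylSet V ∩ cyl τ = cylSet {ρ ∈ V | τ <+: ρ} := by
  ext x
  simp only [cylSet, Set.mem_inter_iff, Set.mem_iUnion, Set.mem_ofPred_eq, exists_prop]
  constructor
  · rintro ⟨⟨ρ, hρ, hxρ⟩, hxτ⟩
    refine ⟨ρ, ⟨hρ, ?_⟩, hxρ⟩
    exact (prefix_or_prefix_of_mem_cyl hxρ hxτ).resolve_left fun h => hτ ⟨ρ, hρ, h⟩
  · rintro ⟨ρ, ⟨hρ, hτρ⟩, hxρ⟩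
    exact ⟨⟨ρ, hρ, hxρ⟩, cyl_anti hτρ hxρ⟩

lemma sep_prefix_concatSet (hτ : ¬∃ ρ ∈ V, ρ <+: τ) :
    {π ∈ concatSet V W | τ <+: π} = concatSet {ρ ∈ V | τ <+: ρ} W := by
  ext π
  constructor
  · rintro ⟨⟨ρ, hρ, σ, hσ, rfl⟩, hτπ⟩
    refine ⟨ρ, ⟨hρ, ?_⟩, σ, hσ, rfl⟩
    exact (List.prefix_or_prefix_of_prefix (List.prefix_append ρ σ) hτπ).resolve_left
      fun h => hτ ⟨ρ, hρ, h⟩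
  · rintro ⟨ρ, ⟨hρ, hτρ⟩, σ, hσ, rfl⟩
    exact ⟨⟨ρ, hρ, σ, hσ, rfl⟩, hτρ.trans (List.prefix_append ρ σ)⟩

lemma relMeas_cylSet_concatSet (hμ : IsFairCoin μ) (hV : PrefixFreeSet V) (hW : PrefixFreeSet W)
    (hτ : ¬∃ ρ ∈ V, ρ <+: τ) :
    relMeas μ τ (cylSet (concatSet V W)) = relMeas μ τ (cylSet V) * μ (cylSet W) := by
  have hτ' : ¬∃ π ∈ concatSet V W, π <+: τ := by
    rintro ⟨_, ⟨ρ, hρ, σ, -, rfl⟩, h⟩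
    exact hτ ⟨ρ, hρ, (List.prefix_append ρ σ).trans h⟩
  have hVτ : PrefixFreeSet {ρ ∈ V | τ <+: ρ} := hV.mono (Set.sep_subset _ _)
  rw [relMeas, relMeas, cylSet_inter_cyl hτ', sep_prefix_concatSet hτ, cylSet_inter_cyl hτ,
    hμ.measure_cylSet (hVτ.concatSet hW), kraftSum_concatSet hVτ, hμ.measure_cylSet hVτ,
    hμ.measure_cylSet hW, mul_assoc]

end Measure

theorem stmt_11_general (μ : MeasureTheory.Measure (ℕ → Bool)) (hμ : IsFairCoin μ)
    (V : Set (List Bool)) (hV : PrefixFreeSet V)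
    (δ : ℝ) (hδ1 : δ ≤ 1)
    (hbound : ∀ σ : List Bool, (¬∃ ρ ∈ V, ρ <+: σ) →
      relMeas μ σ (cylSet V) ≤ ENNReal.ofReal (1 - δ)) :
    ∀ (k : ℕ) (τ : List Bool), (¬∃ ρ ∈ V, ρ <+: τ) →
      relMeas μ τ (cylSet (iterSet V k)) ≤ ENNReal.ofReal ((1 - δ) ^ (k + 1)) := by
  intro k
  induction k with
  | zero => simpa only [iterSet, zero_add, pow_one] using hbound
  | succ k ih =>
    intro τ hτ
    have hnil : ¬∃ ρ ∈ V, ρ <+: [] := fun ⟨ρ, hρ, h⟩ =>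
      hτ ⟨ρ, hρ, List.prefix_nil.1 h ▸ List.nil_prefix⟩
    have hμk : μ (cylSet (iterSet V k)) ≤ ENNReal.ofReal ((1 - δ) ^ (k + 1)) := by
      simpa only [relMeas_nil] using ih [] hnil
    rw [iterSet_succ_eq_concatSet_left, relMeas_cylSet_concatSet hμ hV (hV.iterSet k) hτ,
      pow_succ', ENNReal.ofReal_mul (by linarith)]
    exact mul_le_mul' (hbound τ hτ) hμk

/-- If `V` is prefix-free and `μ_σ([V]) ≤ 1 - δ` for every `σ` having
no prefix in `V`, then `μ_τ([V^k]) ≤ (1 - δ)^k` for every `k ≥ 1` and every `τ` having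
no prefix in `V`. -/
theorem stmt_11 (μ : MeasureTheory.Measure (ℕ → Bool)) (hμ : IsFairCoin μ)
    (V : Set (List Bool)) (hV : PrefixFreeSet V)
    (δ : ℝ) (hδ0 : 0 < δ) (hδ1 : δ ≤ 1)
    (hbound : ∀ σ : List Bool, (¬∃ ρ ∈ V, ρ <+: σ) →
      relMeas μ σ (cylSet V) ≤ ENNReal.ofReal (1 - δ)) :
    ∀ (k : ℕ) (τ : List Bool), (¬∃ ρ ∈ V, ρ <+: τ) →
      relMeas μ τ (cylSet (iterSet V k)) ≤ ENNReal.ofReal ((1 - δ) ^ (k + 1)) :=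
  stmt_11_general μ hμ V hV δ hδ1 hbound
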